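/- There exists a weighted graph satisfying the elliptic Harnack inequality but not having controlled weights: let G = ℤ × {0,1,2} with edges {(n,0),(n+1,0)} for n ∈ ℤ and {(n,i),(n,j)} for all n and i ≠ j in {0,1,2}; put weight ν = 2^{−|n|} on the edges {(n,1),(n,2)} and weight 1 on all other edges. Then (G,ν) does not have controlled weights (inf over edges of ν_{xy}/μ(x) = 0) but satisfies EHI. -/

import Mathlib

/-!
Harmonicity at the two off-line vertices of the triangle over `n` forces `h (n,1) = h (n,2)`
(the difference is multiplied by `1 + 2·2^{-|n|} > 0`), and then `h (n,1) = h (n,0)`, however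
small the weight `2^{-|n|}` is. Harmonicity at `(n,0)` then reduces to `f (n+1) + f (n-1) = 2 f n`
for `f = h (·,0)`, so a harmonic function is affine along the base line. A nonnegative affine
function on `[m - L, m + L]` varies by a factor at most `3` on `[m - L/2, m + L/2]`, which gives
EHI with `C₁ = 3`. Controlled weights fail since `ν((n,1),(n,2)) = 2^{-|n|} → 0` while `μ(n,1) ≥ 1`.
-/

structure WeightedGraph (V : Type) where
  Adj : V → V → Prop
  symm : ∀ {x y}, Adj x y → Adj y x
  irrefl : ∀ x, ¬ Adj x x
  nbhd : V → Finset V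
  mem_nbhd : ∀ x y, y ∈ nbhd x ↔ Adj x y
  conn : ∀ x y, Relation.ReflTransGen Adj x y
  ν : V → V → ℝ
  ν_symm : ∀ x y, ν x y = ν y x
  ν_nonneg : ∀ x y, 0 ≤ ν x y
  ν_pos_iff : ∀ x y, 0 < ν x y ↔ Adj x y

namespace WeightedGraph

variable {V : Type} (W : WeightedGraph V)

/-- The underlying simple graph. -/
def G : SimpleGraph V where
  Adj := W.Adj
  symm := ⟨fun _ _ h => W.symm h⟩
  loopless := ⟨fun x h => W.irrefl x h⟩

/-- Graph distance. -/
noncomputable def dist (x y : V) : ℕ := W.G.dist x y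

/-- Closed ball of integer radius. -/
noncomputable def ball (x : V) (R : ℕ) : Set V := {y | W.dist x y ≤ R}

/-- Closed ball of real radius. -/
noncomputable def rball (x : V) (ρ : ℝ) : Set V := {y | (W.dist x y : ℝ) ≤ ρ}

/-- Total weight at a vertex. -/
def mu (x : V) : ℝ := ∑ y ∈ W.nbhd x, W.ν x y

/-- The (unnormalized) Laplacian, `μ(x)·Δf(x)`. -/
def lap (h : V → ℝ) (x : V) : ℝ := ∑ y ∈ W.nbhd x, W.ν x y * (h y - h x)

/-- `h` is harmonic on `A`. -/
def HarmOn (h : V → ℝ) (A : Set V) : Prop := ∀ x ∈ A, W.lap h x = 0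

/-- Exterior boundary of a set. -/
def bdry (A : Set V) : Set V := {y | y ∉ A ∧ ∃ x ∈ A, W.Adj x y}

/-- Closure `A ∪ ∂A`. -/
def cl (A : Set V) : Set V := A ∪ W.bdry A

/-- Controlled weights with constant `p₀`. -/
def ControlledWeights (p₀ : ℝ) : Prop :=
  0 < p₀ ∧ ∀ x y, W.Adj x y → p₀ * W.mu x ≤ W.ν x y

/-- The elliptic Harnack inequality with constant `C₁`. -/
def EHI (C₁ : ℝ) : Prop :=
  ∀ x : V, ∀ R : ℕ, 1 ≤ R → ∀ h : V → ℝ, (∀ v, 0 ≤ h v) →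
    W.HarmOn h (W.ball x (2 * R)) →
    ∀ y ∈ W.ball x R, ∀ z ∈ W.ball x R, h y ≤ C₁ * h z

/-- `g` is the Green's function of the walk killed outside `D`, with pole `x₀`:
it is nonnegative, vanishes outside `D`, is harmonic on `D ∖ {x₀}` and
satisfies `μ(x₀)·Δg(x₀) = -1`. -/
def IsGreen (D : Set V) (x₀ : V) (g : V → ℝ) : Prop :=
  (∀ v, 0 ≤ g v) ∧ (∀ y, y ∉ D → g y = 0) ∧
  (∀ x ∈ D, x ≠ x₀ → W.lap g x = 0) ∧ W.lap g x₀ = -1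

end WeightedGraph


/-- The vertex set of the example: three copies of `ℤ`. -/
abbrev VEx : Type := ℤ × Fin 3

/-- Adjacency of the example graph: `(n,0) ∼ (n+1,0)` along the base line,
and `(n,i) ∼ (n,j)` for `i ≠ j` in each triangle. -/
def adjEx (x y : VEx) : Prop :=
  (x.2 = 0 ∧ y.2 = 0 ∧ (x.1 = y.1 + 1 ∨ y.1 = x.1 + 1)) ∨
  (x.1 = y.1 ∧ x.2 ≠ y.2)

open scoped Classical in
/-- The weights of the example: weight `2^{-|n|}` on the edge
`{(n,1),(n,2)}` and weight `1` on every other edge. -/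
noncomputable def nuEx (x y : VEx) : ℝ :=
  if adjEx x y then
    (if x.1 = y.1 ∧ x.2 ≠ 0 ∧ y.2 ≠ 0 then (2 : ℝ) ^ (-|x.1|) else 1)
  else 0

namespace SimpleGraph

variable {V : Type*} {G : SimpleGraph V} {f : V → ℤ}

theorem Walk.natAbs_sub_le_length (hf : ∀ ⦃u v⦄, G.Adj u v → (f u - f v).natAbs ≤ 1)
    {x y : V} (w : G.Walk x y) : (f x - f y).natAbs ≤ w.length := by
  induction w with
  | nil => simp
  | cons huv _ ih =>
    have := hf huv
    rw [Walk.length_cons]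
    omega

theorem Reachable.natAbs_sub_le_dist (hf : ∀ ⦃u v⦄, G.Adj u v → (f u - f v).natAbs ≤ 1)
    {x y : V} (h : G.Reachable x y) : (f x - f y).natAbs ≤ G.dist x y := by
  obtain ⟨w, hw⟩ := h.exists_walk_length_eq_dist
  exact hw ▸ w.natAbs_sub_le_length hf

end SimpleGraph

namespace WeightedGraph

variable {V : Type} (W : WeightedGraph V)

theorem connected [Nonempty V] : W.G.Connected :=
  ⟨fun x y => (SimpleGraph.reachable_iff_reflTransGen x y).mpr (W.conn x y)⟩

theorem dist_triangle [Nonempty V] (x y z : V) : W.dist x z ≤ W.dist x y + W.dist y z :=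
  W.connected.dist_triangle

theorem dist_le_one_of_adj {x y : V} (h : W.Adj x y) : W.dist x y ≤ 1 :=
  (SimpleGraph.dist_eq_one_iff_adj (G := W.G)).mpr h |>.le

end WeightedGraph

theorem exists_affine_of_second_diff_eq_zero {f : ℤ → ℝ} {a b : ℤ}
    (hf : ∀ k, a < k → k < b → f (k + 1) + f (k - 1) = 2 * f k) :
    ∃ c s : ℝ, ∀ k, a ≤ k → k ≤ b → f k = c + k * s := by
  set s := f (a + 1) - f a
  refine ⟨f a - a * s, s, ?_⟩
  have step : ∀ k, a ≤ k → k < b → f k = f a - a * s + k * s ∧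
      f (k + 1) = f a - a * s + (k + 1 : ℤ) * s := by
    intro k hak
    induction k, hak using Int.leInduction with
    | base => intro _; constructor <;> push_cast <;> ring
    | succ k hak ih =>
      intro hkb
      obtain ⟨h_k, h_succ⟩ := ih (by omega)
      have h_rec := hf (k + 1) (by omega) (by omega)
      rw [add_sub_cancel_right] at h_rec
      refine ⟨h_succ, ?_⟩
      push_cast at h_k h_succ ⊢
      linarith
  intro k hak hkb
  rcases hkb.lt_or_eq with hkb | rfl
  · exact (step k hak hkb).1
  · rcases hak.lt_or_eq with hak | rfl
    · simpa using (step (k - 1) (by omega) (by omega)).2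
    · ring

theorem le_three_mul_of_affine_nonneg {c s m L y z : ℝ} (hl : 0 ≤ c + (m - L) * s)
    (hr : 0 ≤ c + (m + L) * s) (hy : 2 * |y - m| ≤ L) (hz : 2 * |z - m| ≤ L) :
    c + y * s ≤ 3 * (c + z * s) := by
  have hLs : L * |s| ≤ c + m * s := by
    rcases abs_cases s with ⟨hs, -⟩ | ⟨hs, -⟩ <;> rw [hs] <;> linarith
  have half_bound : ∀ t, 2 * |t - m| ≤ L → 2 * |(t - m) * s| ≤ c + m * s := fun t ht => by
    rw [abs_mul]; nlinarith [abs_nonneg s]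
  have hy' := le_abs_self ((y - m) * s)
  have hz' := neg_abs_le ((z - m) * s)
  linarith [half_bound y hy, half_bound z hz]

theorem le_three_mul_of_second_diff_eq_zero {f : ℤ → ℝ} (hf_nonneg : ∀ k, 0 ≤ f k) {m : ℤ}
    {L : ℕ} (hf : ∀ k, (k - m).natAbs < L → f (k + 1) + f (k - 1) = 2 * f k) {y z : ℤ}
    (hy : 2 * (y - m).natAbs ≤ L) (hz : 2 * (z - m).natAbs ≤ L) : f y ≤ 3 * f z := by
  obtain ⟨c, s, hcs⟩ := exists_affine_of_second_diff_eq_zero (a := m - L) (b := m + L)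
    (fun k hk₁ hk₂ => hf k (by omega))
  have cast_bound : ∀ t : ℤ, 2 * (t - m).natAbs ≤ L → 2 * |(t : ℝ) - m| ≤ L := fun t ht => by
    have : ((2 * (t - m).natAbs : ℕ) : ℝ) ≤ L := by exact_mod_cast ht
    simpa [Nat.cast_natAbs, Int.cast_abs] using this
  rw [hcs y (by omega) (by omega), hcs z (by omega) (by omega)]
  refine le_three_mul_of_affine_nonneg (m := m) (L := L) ?_ ?_ (cast_bound y hy) (cast_bound z hz)
  · simpa [hcs (m - L) le_rfl (by omega)] using hf_nonneg (m - L)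
  · simpa [hcs (m + L) (by omega) le_rfl] using hf_nonneg (m + L)

theorem adjEx_symm {x y : VEx} (h : adjEx x y) : adjEx y x := by
  unfold adjEx at *
  omega

theorem adjEx_irrefl (x : VEx) : ¬ adjEx x x := by
  unfold adjEx
  omega

theorem adjEx_succ (n : ℤ) : adjEx (n, 0) (n + 1, 0) := Or.inl ⟨rfl, rfl, Or.inr rfl⟩

theorem adjEx_of_ne {n : ℤ} {i j : Fin 3} (hij : i ≠ j) : adjEx (n, i) (n, j) := Or.inr ⟨rfl, hij⟩

theorem natAbs_fst_sub_le_one_of_adjEx {x y : VEx} (h : adjEx x y) : (x.1 - y.1).natAbs ≤ 1 := by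
  unfold adjEx at h
  omega

theorem reflTransGen_adjEx_origin (x : VEx) : Relation.ReflTransGen adjEx x (0, 0) := by
  have line (n : ℤ) : Relation.ReflTransGen adjEx (n, 0) (0, 0) := by
    induction n using Int.induction_on with
    | zero => rfl
    | succ k ih => exact .head (adjEx_symm (adjEx_succ k)) ih
    | pred k ih => exact .head (by simpa using adjEx_succ (-(k : ℤ) - 1)) ih
  obtain ⟨n, i⟩ := x
  by_cases hi : i = 0
  · exact hi ▸ line n
  · exact .head (adjEx_of_ne hi) (line n)

def nbhdEx (x : VEx) : Finset VEx :=
  if x.2 = 0 then {(x.1 + 1, 0), (x.1 - 1, 0), (x.1, 1), (x.1, 2)}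
  else if x.2 = 1 then {(x.1, 0), (x.1, 2)}
  else {(x.1, 0), (x.1, 1)}

theorem mem_nbhdEx (x y : VEx) : y ∈ nbhdEx x ↔ adjEx x y := by
  obtain ⟨n, i⟩ := x
  obtain ⟨m, j⟩ := y
  fin_cases i <;> fin_cases j <;> simp [nbhdEx, adjEx, Prod.ext_iff] <;> omega

theorem nuEx_symm (x y : VEx) : nuEx x y = nuEx y x := by
  unfold nuEx
  split_ifs <;> first | rfl | grind [adjEx]

theorem nuEx_nonneg (x y : VEx) : 0 ≤ nuEx x y := by
  unfold nuEx
  split_ifs <;> positivity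

theorem nuEx_pos_iff (x y : VEx) : 0 < nuEx x y ↔ adjEx x y := by
  unfold nuEx
  split_ifs <;> simp_all [zpow_pos]

noncomputable def WEx : WeightedGraph VEx where
  Adj := adjEx
  symm := adjEx_symm
  irrefl := adjEx_irrefl
  nbhd := nbhdEx
  mem_nbhd := mem_nbhdEx
  conn x y := (reflTransGen_adjEx_origin x).trans <|
    Relation.ReflTransGen.mono (fun _ _ => adjEx_symm) _ _
      (Relation.reflTransGen_swap.mpr (reflTransGen_adjEx_origin y))
  ν := nuEx
  ν_symm := nuEx_symm
  ν_nonneg := nuEx_nonneg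
  ν_pos_iff := nuEx_pos_iff

theorem mu_WEx_one (n : ℤ) : WEx.mu (n, 1) = 1 + 2 ^ (-|n|) := by
  simp [WeightedGraph.mu, WEx, nbhdEx, nuEx, adjEx]

theorem nuEx_one_two (n : ℤ) : nuEx (n, 1) (n, 2) = 2 ^ (-|n|) := by
  simp [nuEx, adjEx]

theorem not_controlledWeights_WEx (p₀ : ℝ) : ¬ WEx.ControlledWeights p₀ := by
  rintro ⟨hp₀, hcw⟩
  obtain ⟨n, hn⟩ := exists_pow_lt_of_lt_one hp₀ (by norm_num : (1 / 2 : ℝ) < 1)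
  have hedge := hcw ((n : ℤ), 1) (n, 2) (adjEx_of_ne (by decide))
  have hw : (2 : ℝ) ^ (-|(n : ℤ)|) = (1 / 2) ^ n := by simp
  change _ ≤ nuEx _ _ at hedge
  rw [mu_WEx_one, nuEx_one_two, hw] at hedge
  nlinarith [pow_pos (by norm_num : (0 : ℝ) < 1 / 2) n]

theorem lap_WEx_zero (h : VEx → ℝ) (n : ℤ) : WEx.lap h (n, 0) =
    (h (n + 1, 0) - h (n, 0)) + ((h (n - 1, 0) - h (n, 0)) +
      ((h (n, 1) - h (n, 0)) + (h (n, 2) - h (n, 0)))) := by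
  have hne : n + 1 ≠ n - 1 := by omega
  simp [WeightedGraph.lap, WEx, nbhdEx, nuEx, adjEx, Finset.sum_insert, hne]

theorem lap_WEx_of_ne_zero (h : VEx → ℝ) (n : ℤ) {i j : Fin 3} (hi : i ≠ 0) (hj : j ≠ 0)
    (hij : i ≠ j) :
    WEx.lap h (n, i) = h (n, 0) - h (n, i) + 2 ^ (-|n|) * (h (n, j) - h (n, i)) := by
  revert hi hj hij
  fin_cases i <;> fin_cases j <;> simp [WeightedGraph.lap, WEx, nbhdEx, nuEx, adjEx]

theorem WEx_eq_of_lap_eq_zero {h : VEx → ℝ} {n : ℤ} (h₁ : WEx.lap h (n, 1) = 0)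
    (h₂ : WEx.lap h (n, 2) = 0) (j : Fin 3) : h (n, j) = h (n, 0) := by
  rw [lap_WEx_of_ne_zero h n (j := 2) (by decide) (by decide) (by decide)] at h₁
  rw [lap_WEx_of_ne_zero h n (j := 1) (by decide) (by decide) (by decide)] at h₂
  have hw : 0 < (2 : ℝ) ^ (-|n|) := by positivity
  have h₁₂ : (h (n, 2) - h (n, 1)) * (1 + 2 * 2 ^ (-|n|)) = 0 := by linear_combination h₁ - h₂
  have h₁₂' : h (n, 2) = h (n, 1) := by
    rcases mul_eq_zero.mp h₁₂ with h₁₂ | h₁₂ <;> linarith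
  match j with
  | 0 => rfl
  | 1 => rw [h₁₂'] at h₁; linarith
  | 2 => rw [h₁₂'] at h₂; linarith

theorem WEx_second_diff_eq_zero {h : VEx → ℝ} {n : ℤ} (h₀ : WEx.lap h (n, 0) = 0)
    (h₁ : WEx.lap h (n, 1) = 0) (h₂ : WEx.lap h (n, 2) = 0) :
    h (n + 1, 0) + h (n - 1, 0) = 2 * h (n, 0) := by
  rw [lap_WEx_zero, WEx_eq_of_lap_eq_zero h₁ h₂ 1, WEx_eq_of_lap_eq_zero h₁ h₂ 2] at h₀
  linarith

theorem natAbs_fst_sub_le_dist_WEx (x y : VEx) : (x.1 - y.1).natAbs ≤ WEx.dist x y :=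
  (WEx.connected.preconnected x y).natAbs_sub_le_dist fun _ _ => natAbs_fst_sub_le_one_of_adjEx

theorem natAbs_fst_sub_add_dist_le_dist_WEx {x y : VEx} (hxy : x.1 ≠ y.1) :
    (x.1 - y.1).natAbs + WEx.dist x (x.1, 0) ≤ WEx.dist x y := by
  obtain ⟨n, i⟩ := x
  dsimp only at hxy ⊢
  by_cases hi : i = 0
  · subst hi
    simpa [WeightedGraph.dist] using natAbs_fst_sub_le_dist_WEx (n, 0) y
  have h_first := WEx.dist_le_one_of_adj (adjEx_of_ne hi : adjEx (n, i) (n, 0))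
  obtain ⟨w, hw⟩ := WEx.connected.exists_walk_length_eq_dist (n, i) y
  change w.length = WEx.dist _ _ at hw
  cases w with
  | nil => exact absurd rfl hxy
  | @cons _ v _ huv q =>
    have h_col : v.1 = n := by
      change adjEx _ _ at huv
      simp only [adjEx] at huv
      omega
    have := q.natAbs_sub_le_length (f := Prod.fst) fun _ _ => natAbs_fst_sub_le_one_of_adjEx
    rw [SimpleGraph.Walk.length_cons] at hw
    omega

theorem dist_WEx_same_fst_le_one (n : ℤ) (i j : Fin 3) : WEx.dist (n, i) (n, j) ≤ 1 := by
  by_cases hij : i = j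
  · simp [hij, WeightedGraph.dist]
  · exact WEx.dist_le_one_of_adj (adjEx_of_ne hij)

theorem dist_WEx_line_le (n m : ℤ) : WEx.dist (n, 0) (m, 0) ≤ (n - m).natAbs := by
  have forward (a : ℤ) (k : ℕ) : WEx.dist (a, 0) (a + k, 0) ≤ k := by
    induction k with
    | zero => simp [WeightedGraph.dist]
    | succ k ih =>
      have step := WEx.dist_le_one_of_adj (adjEx_succ (a + k))
      have := WEx.dist_triangle (a, 0) (a + k, 0) (a + (k + 1 : ℕ), 0)
      push_cast at this ⊢
      rw [← add_assoc] at this ⊢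
      omega
  rcases le_total n m with hnm | hmn
  · obtain ⟨k, hk⟩ := Int.eq_ofNat_of_zero_le (sub_nonneg.mpr hnm)
    obtain rfl : m = n + k := by omega
    simpa using forward n k
  · obtain ⟨k, hk⟩ := Int.eq_ofNat_of_zero_le (sub_nonneg.mpr hmn)
    obtain rfl : n = m + k := by omega
    simpa [WeightedGraph.dist, SimpleGraph.dist_comm] using forward m k

theorem ehi_WEx : WEx.EHI 3 := by
  intro x R hR h h_nonneg h_harm y hy z hz
  obtain ⟨n₀, i₀⟩ := x
  -- `e = 1` iff `x` is off the base line; leaving its column then costs an extra step, so the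
  -- columns within `2R - e` of `n₀` are harmonic and `B(x,R)` meets only those within `(2R - e)/2`.
  set e := WEx.dist (n₀, i₀) (n₀, 0)
  have he : e ≤ 1 := dist_WEx_same_fst_le_one n₀ i₀ 0
  have lap_eq_zero : ∀ w, WEx.dist (n₀, i₀) w ≤ 2 * R → WEx.lap h w = 0 := h_harm
  have column_harm : ∀ m : ℤ, (m - n₀).natAbs < 2 * R - e → ∀ j, WEx.lap h (m, j) = 0 := by
    intro m hm j
    apply lap_eq_zero
    have := WEx.dist_triangle (n₀, i₀) (n₀, 0) (m, j)
    have := WEx.dist_triangle (n₀, 0) (m, 0) (m, j)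
    have := dist_WEx_line_le n₀ m
    have := dist_WEx_same_fst_le_one m 0 j
    omega
  have on_line : ∀ w ∈ WEx.ball (n₀, i₀) R, h w = h (w.1, 0) := by
    rintro ⟨m, i⟩ hw
    change WEx.dist _ _ ≤ R at hw
    have near (j : Fin 3) : WEx.lap h (m, j) = 0 := by
      apply lap_eq_zero
      have := WEx.dist_triangle (n₀, i₀) (m, i) (m, j)
      have := dist_WEx_same_fst_le_one m i j
      omega
    exact WEx_eq_of_lap_eq_zero (near 1) (near 2) i
  have column_bound : ∀ w ∈ WEx.ball (n₀, i₀) R, 2 * (w.1 - n₀).natAbs ≤ 2 * R - e := by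
    intro w hw
    change WEx.dist _ _ ≤ R at hw
    by_cases hcol : n₀ = w.1
    · omega
    · have := natAbs_fst_sub_add_dist_le_dist_WEx (x := (n₀, i₀)) hcol
      dsimp only at this
      omega
  rw [on_line y hy, on_line z hz]
  exact le_three_mul_of_second_diff_eq_zero (f := fun m => h (m, 0)) (fun _ => h_nonneg _)
    (fun k hk => WEx_second_diff_eq_zero (column_harm k hk 0) (column_harm k hk 1)
      (column_harm k hk 2)) (column_bound y hy) (column_bound z hz)

/-- **EHI does not imply controlled weights.** The weighted graph
`ℤ × {0,1,2}` with edges `{(n,0),(n+1,0)}` and `{(n,i),(n,j)}` (`i ≠ j`),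
with weight `2^{-|n|}` on the edges `{(n,1),(n,2)}` and weight `1` on all
other edges, does not have controlled weights but satisfies the elliptic
Harnack inequality. -/
theorem ehi_without_controlled_weights :
    ∃ W : WeightedGraph VEx,
      (∀ x y, W.Adj x y ↔ adjEx x y) ∧ (∀ x y, W.ν x y = nuEx x y) ∧
      (¬ ∃ p₀ : ℝ, W.ControlledWeights p₀) ∧ (∃ C₁ : ℝ, W.EHI C₁) :=
  ⟨WEx, fun _ _ => Iff.rfl, fun _ _ => rfl, fun ⟨p₀, hp₀⟩ => not_controlledWeights_WEx p₀ hp₀,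
    3, ehi_WEx⟩
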